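/- Let ρ : L^∞_c → ℝ be a monetary risk measure such that its acceptance set 𝒜_ρ is 𝒫-sensitive. Then the set 𝒬_rel := {Q ∈ 𝔓_c(Ω) : ρ^Q_E(0) ∈ ℝ} is nonempty and is a reduction set for 𝒜_ρ. -/

import Mathlib

open MeasureTheory Filter Set

variable {Ω : Type*} [MeasurableSpace Ω]

/-- Quasi-sure equality with respect to a family of measures. -/
def QSEq (𝔓 : Set (Measure Ω)) (x y : Ω → ℝ) : Prop := ∀ P ∈ 𝔓, x =ᵐ[P] y

def qsSetoid (𝔓 : Set (Measure Ω)) : Setoid (Ω → ℝ) where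
  r := QSEq 𝔓
  iseqv := ⟨fun _ _ _ => EventuallyEq.refl _ _,
    fun h P hP => (h P hP).symm,
    fun h1 h2 P hP => (h1 P hP).trans (h2 P hP)⟩

/-- The robust space `L⁰_c`. -/
def L0c (𝔓 : Set (Measure Ω)) := Quotient (qsSetoid 𝔓)

def aeSetoid (Q : Measure Ω) : Setoid (Ω → ℝ) where
  r x y := x =ᵐ[Q] y
  iseqv := ⟨fun _ => EventuallyEq.refl _ _, EventuallyEq.symm, EventuallyEq.trans⟩

/-- The space `L⁰_Q` for a single measure. -/
def L0 (Q : Measure Ω) := Quotient (aeSetoid Q)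

/-- Probability measures dominated by the family `𝔓` (vanishing on `𝔓`-polar sets). -/
def Pc (𝔓 : Set (Measure Ω)) : Set (Measure Ω) :=
  {Q | IsProbabilityMeasure Q ∧ ∀ N : Set Ω, (∀ P ∈ 𝔓, P N = 0) → Q N = 0}

abbrev PcM (𝔓 : Set (Measure Ω)) := {Q : Measure Ω // Q ∈ Pc 𝔓}

theorem QSEq.aeEq {𝔓 : Set (Measure Ω)} (Q : PcM 𝔓) {x y : Ω → ℝ}
    (h : QSEq 𝔓 x y) : x =ᵐ[Q.1] y :=
  ae_iff.2 (Q.2.2 _ fun P hP => ae_iff.1 (h P hP))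

/-- The map `j_Q : L⁰_c → L⁰_Q`. -/
def jQ {𝔓 : Set (Measure Ω)} (Q : PcM 𝔓) : L0c 𝔓 → L0 Q.1 :=
  Quotient.lift (fun x => Quotient.mk (aeSetoid Q.1) x)
    (fun _ _ h => Quotient.sound (h.aeEq Q))

/-- The `𝔓`-quasi-sure order on `L⁰_c`. -/
def qsLe {𝔓 : Set (Measure Ω)} : L0c 𝔓 → L0c 𝔓 → Prop :=
  Quotient.lift₂ (fun x y => ∀ P ∈ 𝔓, x ≤ᵐ[P] y)
    (fun _ _ _ _ ha hb => propext
      ⟨fun h P hP => ((ha P hP).symm.le.trans (h P hP)).trans (hb P hP).le,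
       fun h P hP => ((ha P hP).le.trans (h P hP)).trans (hb P hP).symm.le⟩)

/-- The `Q`-a.s. order on `L⁰_c`, for `Q ∈ 𝔓_c(Ω)`. -/
def qLe {𝔓 : Set (Measure Ω)} (Q : PcM 𝔓) : L0c 𝔓 → L0c 𝔓 → Prop :=
  Quotient.lift₂ (fun x y => x ≤ᵐ[Q.1] y)
    (fun _ _ _ _ ha hb => propext
      ⟨fun h => (((ha.aeEq Q).symm.le.trans h)).trans (hb.aeEq Q).le,
       fun h => (((ha.aeEq Q).le.trans h)).trans (hb.aeEq Q).symm.le⟩)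

def L0c.add {𝔓 : Set (Measure Ω)} : L0c 𝔓 → L0c 𝔓 → L0c 𝔓 :=
  Quotient.map₂ (fun x y ω => x ω + y ω)
    (fun _ _ ha _ _ hb P hP => by filter_upwards [ha P hP, hb P hP] with ω h1 h2; simp [h1, h2])

def L0c.const (𝔓 : Set (Measure Ω)) (m : ℝ) : L0c 𝔓 := Quotient.mk (qsSetoid 𝔓) (fun _ => m)

def L0c.smul {𝔓 : Set (Measure Ω)} (c : ℝ) : L0c 𝔓 → L0c 𝔓 :=
  Quotient.map (fun x ω => c * x ω)
    (fun _ _ ha P hP => by filter_upwards [ha P hP] with ω h1; simp [h1])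

def L0c.abs {𝔓 : Set (Measure Ω)} : L0c 𝔓 → L0c 𝔓 :=
  Quotient.map (fun x ω => |x ω|)
    (fun _ _ ha P hP => by filter_upwards [ha P hP] with ω h1; simp [h1])

/-- Multiplication by the indicator of a set `A`. -/
noncomputable def L0c.mulInd {𝔓 : Set (Measure Ω)} (A : Set Ω) : L0c 𝔓 → L0c 𝔓 :=
  Quotient.map (fun x => A.indicator x)
    (fun _ _ ha P hP => by
      filter_upwards [ha P hP] with ω h1
      by_cases h : ω ∈ A <;> simp [Set.indicator, h, h1])

/-- The class of the indicator function of `A`. -/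
noncomputable def L0c.ind (𝔓 : Set (Measure Ω)) (A : Set Ω) : L0c 𝔓 :=
  Quotient.mk (qsSetoid 𝔓) (A.indicator fun _ => (1 : ℝ))

/-- The bounded elements: `L^∞_c`. -/
def Linftyc (𝔓 : Set (Measure Ω)) : Set (L0c 𝔓) :=
  {X | ∃ m : ℝ, 0 < m ∧ qsLe X.abs (L0c.const 𝔓 m)}

/-- Expectation under `R ∈ 𝔓_c(Ω)`. -/
noncomputable def expct {𝔓 : Set (Measure Ω)} (R : PcM 𝔓) : L0c 𝔓 → ℝ :=
  Quotient.lift (fun x => integral R.1 (fun ω => x ω))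
    (fun _ _ h => integral_congr_ae (h.aeEq R))

/-- `𝒬` is a reduction set for `𝒞 ⊆ 𝒳`. -/
def IsReductionSet (𝔓 : Set (Measure Ω)) (𝒳 𝒞 : Set (L0c 𝔓)) (𝒬 : Set (PcM 𝔓)) : Prop :=
  𝒬.Nonempty ∧ ∀ X ∈ 𝒳, (X ∈ 𝒞 ↔ ∀ Q ∈ 𝒬, jQ Q X ∈ jQ Q '' 𝒞)

/-- `𝒞 ⊆ 𝒳` is `𝔓`-sensitive. -/
def PSensitive (𝔓 : Set (Measure Ω)) (𝒳 𝒞 : Set (L0c 𝔓)) : Prop :=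
  𝒞 = ∅ ∨ ∀ X ∈ 𝒳, (X ∈ 𝒞 ↔ ∀ Q : PcM 𝔓, jQ Q X ∈ jQ Q '' 𝒞)

/-- `ρ^Q_E(X) = inf { ρ(Y) : Y ∈ L^∞_c, j_Q(Y) = j_Q(X) }`, valued in `[-∞,∞]`. -/
noncomputable def rhoQE {Ω : Type*} [MeasurableSpace Ω] {𝔓 : Set (Measure Ω)}
    (ρ : L0c 𝔓 → ℝ) (Q : PcM 𝔓) (X : L0c 𝔓) : EReal :=
  ⨅ Y ∈ {Y | Y ∈ Linftyc 𝔓 ∧ jQ Q Y = jQ Q X}, (ρ Y : EReal)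

/-!
If `ρ^Q_E(0) = -∞`, there are `Y` with `j_Q Y = 0` and `ρ Y` arbitrarily negative; adding such a `Y`
to a bounded `X` leaves `j_Q X` unchanged and, by monotonicity and cash-additivity, makes it
acceptable. So these `Q` impose no constraint in the `𝔓`-sensitivity characterization, while
`ρ^Q_E(0) ≤ ρ(0) < ∞` always holds. If no `Q` were relevant, every bounded position would be
acceptable, including the constant `1 - ρ(0)`, whose risk is `1`.
-/

section

variable {𝔓 : Set (Measure Ω)}

theorem L0c.const_mem_Linftyc (c : ℝ) : L0c.const 𝔓 c ∈ Linftyc 𝔓 :=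
  ⟨|c| + 1, by positivity, fun _ _ => Eventually.of_forall fun _ => (lt_add_one |c|).le⟩

theorem L0c.add_mem_Linftyc {X Y : L0c 𝔓} (hX : X ∈ Linftyc 𝔓) (hY : Y ∈ Linftyc 𝔓) :
    X.add Y ∈ Linftyc 𝔓 := by
  obtain ⟨m, hm, hXm⟩ := hX
  obtain ⟨n, hn, hYn⟩ := hY
  refine ⟨m + n, add_pos hm hn, ?_⟩
  induction X using Quotient.inductionOn with | h x => ?_
  induction Y using Quotient.inductionOn with | h y => ?_
  intro P hP
  filter_upwards [hXm P hP, hYn P hP] with ω hx hy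
  exact (abs_add_le (x ω) (y ω)).trans (add_le_add hx hy)

theorem L0c.const_zero_add_const (c : ℝ) :
    (L0c.const 𝔓 0).add (L0c.const 𝔓 c) = L0c.const 𝔓 c :=
  Quotient.sound fun _ _ => Eventually.of_forall fun _ => zero_add c

theorem qsLe_add_add_const {X Y : L0c 𝔓} {m : ℝ} (hX : qsLe X.abs (L0c.const 𝔓 m)) :
    qsLe (Y.add X) (Y.add (L0c.const 𝔓 m)) := by
  induction Y using Quotient.inductionOn with | h y => ?_
  induction X using Quotient.inductionOn with | h x => ?_
  intro P hP
  filter_upwards [hX P hP] with ω hx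
  exact add_le_add_right ((le_abs_self (x ω)).trans hx) (y ω)

theorem jQ_add_eq_of_jQ_eq_zero {Q : PcM 𝔓} {X Y : L0c 𝔓}
    (hY : jQ Q Y = jQ Q (L0c.const 𝔓 0)) : jQ Q (Y.add X) = jQ Q X := by
  induction Y using Quotient.inductionOn with | h y => ?_
  induction X using Quotient.inductionOn with | h x => ?_
  have hy : y =ᵐ[Q.1] fun _ => (0 : ℝ) := Quotient.exact hY
  refine Quotient.sound ?_
  filter_upwards [hy] with ω hω
  show y ω + x ω = x ω
  rw [hω, zero_add]

theorem PSensitive.mem_iff {𝒳 𝒞 : Set (L0c 𝔓)} (h : PSensitive 𝔓 𝒳 𝒞) (h𝒞 : 𝒞.Nonempty) :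
    ∀ X ∈ 𝒳, (X ∈ 𝒞 ↔ ∀ Q : PcM 𝔓, jQ Q X ∈ jQ Q '' 𝒞) :=
  h.resolve_left h𝒞.ne_empty

variable {ρ : L0c 𝔓 → ℝ}

theorem rhoQE_le {Q : PcM 𝔓} {X Y : L0c 𝔓} (hY : Y ∈ Linftyc 𝔓) (hYX : jQ Q Y = jQ Q X) :
    rhoQE ρ Q X ≤ ρ Y :=
  iInf₂_le Y ⟨hY, hYX⟩

theorem rhoQE_ne_top {Q : PcM 𝔓} {X : L0c 𝔓} (hX : X ∈ Linftyc 𝔓) : rhoQE ρ Q X ≠ ⊤ :=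
  ne_top_of_le_ne_top (EReal.coe_ne_top _) (rhoQE_le hX rfl)

theorem exists_lt_of_rhoQE_eq_bot {Q : PcM 𝔓} {X : L0c 𝔓} (h : rhoQE ρ Q X = ⊥) (r : ℝ) :
    ∃ Y, (Y ∈ Linftyc 𝔓 ∧ jQ Q Y = jQ Q X) ∧ ρ Y < r := by
  obtain ⟨Y, hY⟩ := iInf_lt_iff.1 (h ▸ EReal.bot_lt_coe r : rhoQE ρ Q X < r)
  obtain ⟨hYX, hρY⟩ := iInf_lt_iff.1 hY
  exact ⟨Y, hYX, EReal.coe_lt_coe_iff.1 hρY⟩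

theorem rho_const (hcash : ∀ X ∈ Linftyc 𝔓, ∀ m : ℝ, ρ (X.add (L0c.const 𝔓 m)) = ρ X + m)
    (c : ℝ) : ρ (L0c.const 𝔓 c) = ρ (L0c.const 𝔓 0) + c := by
  rw [← L0c.const_zero_add_const c]
  exact hcash _ (L0c.const_mem_Linftyc 0) c

theorem jQ_mem_image_acceptance_of_rhoQE_eq_bot
    (hmono : ∀ X ∈ Linftyc 𝔓, ∀ Y ∈ Linftyc 𝔓, qsLe X Y → ρ X ≤ ρ Y)
    (hcash : ∀ X ∈ Linftyc 𝔓, ∀ m : ℝ, ρ (X.add (L0c.const 𝔓 m)) = ρ X + m)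
    {Q : PcM 𝔓} (hQ : rhoQE ρ Q (L0c.const 𝔓 0) = ⊥) {X : L0c 𝔓} (hX : X ∈ Linftyc 𝔓) :
    jQ Q X ∈ jQ Q '' {X | X ∈ Linftyc 𝔓 ∧ ρ X ≤ 0} := by
  obtain ⟨m, hm, hXm⟩ := hX
  obtain ⟨Y, ⟨hY, hYzero⟩, hρY⟩ := exists_lt_of_rhoQE_eq_bot hQ (-m)
  have hYX : Y.add X ∈ Linftyc 𝔓 := L0c.add_mem_Linftyc hY ⟨m, hm, hXm⟩
  have hρYX : ρ (Y.add X) ≤ ρ Y + m := by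
    rw [← hcash Y hY m]
    exact hmono _ hYX _ (L0c.add_mem_Linftyc hY (L0c.const_mem_Linftyc m))
      (qsLe_add_add_const hXm)
  exact ⟨Y.add X, ⟨hYX, by linarith⟩, jQ_add_eq_of_jQ_eq_zero hYzero⟩

end

theorem relevant_measures_reduction_set_general {Ω : Type*} [MeasurableSpace Ω]
    (𝔓 : Set (Measure Ω))
    (ρ : L0c 𝔓 → ℝ)
    (hmono : ∀ X ∈ Linftyc 𝔓, ∀ Y ∈ Linftyc 𝔓, qsLe X Y → ρ X ≤ ρ Y)
    (hcash : ∀ X ∈ Linftyc 𝔓, ∀ m : ℝ, ρ (X.add (L0c.const 𝔓 m)) = ρ X + m)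
    (hsens : PSensitive 𝔓 (Linftyc 𝔓) {X | X ∈ Linftyc 𝔓 ∧ ρ X ≤ 0}) :
    {Q : PcM 𝔓 | rhoQE ρ Q (L0c.const 𝔓 0) ≠ ⊤ ∧ rhoQE ρ Q (L0c.const 𝔓 0) ≠ ⊥}.Nonempty ∧
    IsReductionSet 𝔓 (Linftyc 𝔓) {X | X ∈ Linftyc 𝔓 ∧ ρ X ≤ 0}
      {Q : PcM 𝔓 | rhoQE ρ Q (L0c.const 𝔓 0) ≠ ⊤ ∧ rhoQE ρ Q (L0c.const 𝔓 0) ≠ ⊥} := by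
  set 𝒜 : Set (L0c 𝔓) := {X | X ∈ Linftyc 𝔓 ∧ ρ X ≤ 0}
  set 𝒬 : Set (PcM 𝔓) :=
    {Q | rhoQE ρ Q (L0c.const 𝔓 0) ≠ ⊤ ∧ rhoQE ρ Q (L0c.const 𝔓 0) ≠ ⊥}
  have hconst_mem (c : ℝ) : L0c.const 𝔓 c ∈ 𝒜 ↔ c ≤ -ρ (L0c.const 𝔓 0) := by
    simp only [𝒜, mem_ofPred_eq, L0c.const_mem_Linftyc, true_and, rho_const hcash c]
    constructor <;> intro h <;> linarith
  have hsens' := hsens.mem_iff ⟨_, (hconst_mem _).2 le_rfl⟩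
  have hreduce : ∀ X ∈ Linftyc 𝔓, (∀ Q ∈ 𝒬, jQ Q X ∈ jQ Q '' 𝒜) → X ∈ 𝒜 := by
    refine fun X hX h => (hsens' X hX).2 fun Q => ?_
    by_cases hQ : rhoQE ρ Q (L0c.const 𝔓 0) = ⊥
    · exact jQ_mem_image_acceptance_of_rhoQE_eq_bot hmono hcash hQ hX
    · exact h Q ⟨rhoQE_ne_top (L0c.const_mem_Linftyc 0), hQ⟩
  have h𝒬 : 𝒬.Nonempty := by
    by_contra h𝒬
    have h1 := hreduce _ (L0c.const_mem_Linftyc (1 - ρ (L0c.const 𝔓 0)))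
      fun Q hQ => (h𝒬 ⟨Q, hQ⟩).elim
    linarith [(hconst_mem _).1 h1]
  exact ⟨h𝒬, h𝒬, fun X hX => ⟨fun hXA _ _ => ⟨X, hXA, rfl⟩, hreduce X hX⟩⟩

theorem relevant_measures_reduction_set {Ω : Type*} [MeasurableSpace Ω]
    (𝔓 : Set (Measure Ω)) (h𝔓 : 𝔓.Nonempty) (hprob : ∀ P ∈ 𝔓, IsProbabilityMeasure P)
    (ρ : L0c 𝔓 → ℝ)
    (hmono : ∀ X ∈ Linftyc 𝔓, ∀ Y ∈ Linftyc 𝔓, qsLe X Y → ρ X ≤ ρ Y)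
    (hcash : ∀ X ∈ Linftyc 𝔓, ∀ m : ℝ, ρ (X.add (L0c.const 𝔓 m)) = ρ X + m)
    (hsens : PSensitive 𝔓 (Linftyc 𝔓) {X | X ∈ Linftyc 𝔓 ∧ ρ X ≤ 0}) :
    {Q : PcM 𝔓 | rhoQE ρ Q (L0c.const 𝔓 0) ≠ ⊤ ∧ rhoQE ρ Q (L0c.const 𝔓 0) ≠ ⊥}.Nonempty ∧
    IsReductionSet 𝔓 (Linftyc 𝔓) {X | X ∈ Linftyc 𝔓 ∧ ρ X ≤ 0}
      {Q : PcM 𝔓 | rhoQE ρ Q (L0c.const 𝔓 0) ≠ ⊤ ∧ rhoQE ρ Q (L0c.const 𝔓 0) ≠ ⊥} :=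
  relevant_measures_reduction_set_general 𝔓 ρ hmono hcash hsens
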